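/- Let m be a positive integer with 2‖m (i.e., m ≡ 2 mod 4). Let A, B ⊆ Z_m with A ∪ B = Z_m and |A ∩ B| = m - 4. Then R_A(n) = R_B(n) for all n ∈ Z_m if and only if B = A + m/2. -/

import Mathlib

/-!
Since `A ∪ B = ℤ/m`, the sets `A` and `B` are the complements of `D = B \ A` and `C = A \ B`,
and complementation changes the representation function only by a constant:
`R_{Sᶜ}(n) = m - 2|S| + R_S(n)`. Summing `R` over `n` gives `|A|² = |B|²`, so `|C| = |D|`,
hence `R_C = R_D`, and `|C| + |D| ≤ 4`. For sets of at most two elements this forces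
`D = C + m/2`, because `2z = 0` only for `z ∈ {0, m/2}` while `m/2`, being odd, is not of the
form `2x`. Conversely, translating by the element `m/2` of order two preserves `R`.
-/

open Finset

/-- Representation function: number of ordered pairs (a, a') in A × A with a + a' = n. -/
def repFn {m : ℕ} (A : Finset (ZMod m)) (n : ZMod m) : ℕ :=
  ((A ×ˢ A).filter (fun p => p.1 + p.2 = n)).card

lemma repFn_eq_card_filter {m : ℕ} (A : Finset (ZMod m)) (n : ZMod m) :
    repFn A n = #{a ∈ A | n - a ∈ A} := by
  refine card_nbij' Prod.fst (fun a => (a, n - a)) ?_ ?_ ?_ ?_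
  · rintro ⟨a, b⟩ hab
    simp only [coe_filter, mem_product, Set.mem_ofPred_eq] at hab ⊢
    obtain ⟨⟨ha, hb⟩, rfl⟩ := hab
    simpa using ⟨ha, hb⟩
  · intro a ha
    simp_all
  · rintro ⟨a, b⟩ hab
    simp only [coe_filter, mem_product, Set.mem_ofPred_eq] at hab
    simp [← hab.2]
  · intro a _
    rfl

lemma repFn_singleton {m : ℕ} (x n : ZMod m) :
    repFn {x} n = if x + x = n then 1 else 0 := by
  rw [repFn, card_filter, sum_product, sum_singleton, sum_singleton]

lemma repFn_pair {m : ℕ} {x y : ZMod m} (hxy : x ≠ y) (n : ZMod m) :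
    repFn {x, y} n = (if x + x = n then 1 else 0) + (if y + y = n then 1 else 0) +
      2 * (if x + y = n then 1 else 0) := by
  rw [repFn, card_filter, sum_product, sum_pair hxy, sum_pair hxy, sum_pair hxy, add_comm y x]
  ring

lemma repFn_image_add_right {m : ℕ} (A : Finset (ZMod m)) (c n : ZMod m) :
    repFn (A.image (· + c)) (n + c + c) = repFn A n := by
  rw [repFn, repFn, ← prodMap_image_product, filter_image,
    card_image_of_injective _ (Prod.map_injective.2 ⟨add_left_injective c, add_left_injective c⟩)]
  congr 2
  ext p
  simp only [Prod.map_fst, Prod.map_snd]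
  constructor <;> intro h <;> linear_combination h

lemma sum_repFn {m : ℕ} [NeZero m] (A : Finset (ZMod m)) :
    ∑ n, repFn A n = #A ^ 2 := by
  rw [sq, ← card_product, card_eq_sum_card_fiberwise (f := fun p => p.1 + p.2)
    (t := univ) (fun _ _ => mem_univ _)]
  rfl

lemma repFn_compl {m : ℕ} [NeZero m] (D : Finset (ZMod m)) (n : ZMod m) :
    repFn Dᶜ n + 2 * #D = m + repFn D n := by
  set T := D.map (Equiv.subLeft n).toEmbedding
  have hT : ∀ a, a ∈ T ↔ n - a ∈ D := fun a => by simp [T, neg_add_eq_sub]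
  have hTcard : #T = #D := card_map _
  have h1 : {a ∈ Dᶜ | n - a ∈ Dᶜ} = (D ∪ T)ᶜ := by ext a; simp [hT]
  have h2 : {a ∈ D | n - a ∈ D} = D ∩ T := by ext a; simp [hT]
  have := card_union_add_card_inter D T
  have := card_compl_add_card (D ∪ T)
  rw [ZMod.card] at this
  rw [repFn_eq_card_filter, repFn_eq_card_filter, h1, h2]
  omega

namespace ZMod

lemma natCast_half_add_self {m : ℕ} (hm : Even m) :
    ((m / 2 : ℕ) : ZMod m) + ((m / 2 : ℕ) : ZMod m) = 0 := by
  rw [← Nat.cast_add, ← two_mul, Nat.mul_div_cancel' hm.two_dvd, natCast_self]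

lemma eq_zero_or_eq_half_of_add_self_eq_zero {m : ℕ} [NeZero m] {z : ZMod m} (hz : z + z = 0) :
    z = 0 ∨ z = ((m / 2 : ℕ) : ZMod m) := by
  obtain ⟨k, hk⟩ : m ∣ z.val + z.val := by
    rwa [← natCast_eq_zero_iff, Nat.cast_add, natCast_zmod_val]
  have : z.val < m := z.val_lt
  have : k < 2 := by nlinarith
  obtain hz0 | hzm : z.val = 0 ∨ z.val = m / 2 := by interval_cases k <;> omega
  · exact .inl ((val_eq_zero z).1 hz0)
  · exact .inr (by rw [← hzm, natCast_zmod_val])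

lemma add_self_ne_half {m : ℕ} (hm : m % 4 = 2) (x : ZMod m) :
    x + x ≠ ((m / 2 : ℕ) : ZMod m) := by
  intro hx
  have := congrArg (castHom (show 2 ∣ m by omega) (ZMod 2)) hx
  rw [map_add, map_natCast, CharTwo.add_self_eq_zero,
    natCast_eq_one_iff_odd.2 (Nat.odd_iff.2 (by omega))] at this
  exact zero_ne_one this

end ZMod

section HalfPeriod

variable {m : ℕ} {h : ZMod m}

/- In `ZMod m` with `m ≡ 2 [MOD 4]`, the element `h` below is `m / 2`. -/

lemma eq_or_eq_add_of_add_self_eq (hker : ∀ z : ZMod m, z + z = 0 → z = 0 ∨ z = h)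
    {x y : ZMod m} (hxy : x + x = y + y) : x = y ∨ x = y + h := by
  rcases hker (x - y) (by linear_combination hxy) with e | e
  · exact .inl (by linear_combination e)
  · exact .inr (by linear_combination e)

lemma eq_add_of_repFn_singleton_eq (hker : ∀ z : ZMod m, z + z = 0 → z = 0 ∨ z = h)
    {c d : ZMod m} (hdc : d ≠ c) (hR : ∀ n, repFn {c} n = repFn {d} n) : d = c + h := by
  have hcd := hR (c + c)
  rw [repFn_singleton, repFn_singleton, if_pos rfl] at hcd
  split_ifs at hcd with hdd
  exact (eq_or_eq_add_of_add_self_eq hker hdd).resolve_left hdc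

lemma pair_eq_image_add_of_repFn_eq (hh : h + h = 0)
    (hker : ∀ z : ZMod m, z + z = 0 → z = 0 ∨ z = h) (hodd : ∀ x : ZMod m, x + x ≠ h)
    {c₁ c₂ d₁ d₂ : ZMod m} (hc : c₁ ≠ c₂) (hd : d₁ ≠ d₂) (hd₁ : d₁ ≠ c₁) (hd₂ : d₂ ≠ c₁)
    (hR : ∀ n, repFn {c₁, c₂} n = repFn {d₁, d₂} n) :
    ({d₁, d₂} : Finset (ZMod m)) = ({c₁, c₂} : Finset (ZMod m)).image (· + h) := by
  simp only [repFn_pair hc, repFn_pair hd] at hR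
  rw [image_insert, image_singleton]
  by_cases hs : c₁ + c₂ = d₁ + d₂
  · have hcc : c₁ + c₂ ≠ c₁ + c₁ := fun e => hc (add_left_cancel e).symm
    have e := hR (c₁ + c₁)
    rw [if_pos rfl, if_neg hcc, if_neg (show d₁ + d₂ ≠ c₁ + c₁ from hs ▸ hcc)] at e
    obtain h₁ | h₂ : d₁ + d₁ = c₁ + c₁ ∨ d₂ + d₂ = c₁ + c₁ := by
      by_contra! hne
      rw [if_neg hne.1, if_neg hne.2] at e
      split_ifs at e <;> omega
    · have e₁ := (eq_or_eq_add_of_add_self_eq hker h₁).resolve_left hd₁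
      rw [e₁, show d₂ = c₂ + h by linear_combination -hs - e₁ - hh]
    · have e₂ := (eq_or_eq_add_of_add_self_eq hker h₂).resolve_left hd₂
      rw [e₂, show d₁ = c₂ + h by linear_combination -hs - e₂ - hh, pair_comm]
  · -- the value 2 at `d₁ + d₂` must come from `2c₁ = 2c₂`, the one at `c₁ + c₂` from `2d₁`
    exfalso
    have e := hR (d₁ + d₂)
    have e' := hR (c₁ + c₂)
    rw [if_neg hs, if_pos rfl] at e
    rw [if_pos rfl, if_neg (Ne.symm hs)] at e'
    obtain ⟨h₁, h₂⟩ : c₁ + c₁ = d₁ + d₂ ∧ c₂ + c₂ = d₁ + d₂ := by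
      constructor <;> by_contra hne <;> split_ifs at e <;> omega
    have h₃ : d₁ + d₁ = c₁ + c₂ := by
      by_contra hne; split_ifs at e' <;> omega
    have e₁ := (eq_or_eq_add_of_add_self_eq hker (h₁.trans h₂.symm)).resolve_left hc
    exact hodd (d₁ - c₂) (by linear_combination h₃ + e₁)

lemma eq_image_add_of_repFn_eq (hh : h + h = 0)
    (hker : ∀ z : ZMod m, z + z = 0 → z = 0 ∨ z = h) (hodd : ∀ x : ZMod m, x + x ≠ h)
    {C D : Finset (ZMod m)} (hCD : Disjoint C D) (hcard : #C = #D) (hC : #C ≤ 2)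
    (hR : ∀ n, repFn C n = repFn D n) : D = C.image (· + h) := by
  interval_cases hk : #C
  · rw [card_eq_zero.1 hk, card_eq_zero.1 hcard.symm, image_empty]
  · obtain ⟨c, rfl⟩ := card_eq_one.1 hk
    obtain ⟨d, rfl⟩ := card_eq_one.1 hcard.symm
    rw [image_singleton, eq_add_of_repFn_singleton_eq hker (by simpa [eq_comm] using hCD) hR]
  · obtain ⟨c₁, c₂, hc, rfl⟩ := card_eq_two.1 hk
    obtain ⟨d₁, d₂, hd, rfl⟩ := card_eq_two.1 hcard.symm
    simp only [disjoint_insert_left, disjoint_insert_right, disjoint_singleton_left,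
      mem_insert, mem_singleton] at hCD
    exact pair_eq_image_add_of_repFn_eq hh hker hodd hc hd (by tauto) (by tauto) hR

end HalfPeriod

lemma card_eq_of_repFn_eq {m : ℕ} [NeZero m] {A B : Finset (ZMod m)}
    (hR : ∀ n, repFn A n = repFn B n) : #A = #B :=
  Nat.pow_left_injective two_ne_zero <| by simp only [← sum_repFn, hR]

lemma eq_compl_sdiff_of_union_eq_univ {m : ℕ} [NeZero m] {A B : Finset (ZMod m)}
    (hU : A ∪ B = univ) : A = (B \ A)ᶜ := by
  ext x
  have := mem_union.1 (hU ▸ mem_univ x)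
  simp only [mem_compl, mem_sdiff]
  tauto

lemma repFn_sdiff_eq_of_union_eq_univ {m : ℕ} [NeZero m] {A B : Finset (ZMod m)}
    (hU : A ∪ B = univ) (hR : ∀ n, repFn A n = repFn B n) (n : ZMod m) :
    repFn (A \ B) n = repFn (B \ A) n := by
  have hRB := repFn_compl (A \ B) n
  have hRA := repFn_compl (B \ A) n
  rw [← eq_compl_sdiff_of_union_eq_univ (union_comm A B ▸ hU)] at hRB
  rw [← eq_compl_sdiff_of_union_eq_univ hU, hR n] at hRA
  have := card_sdiff_comm (card_eq_of_repFn_eq hR)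
  omega

lemma image_add_compl {m : ℕ} [NeZero m] (S : Finset (ZMod m)) (h : ZMod m) :
    Sᶜ.image (· + h) = (S.image (· + h))ᶜ := by
  ext x
  simp [← eq_sub_iff_add_eq]

theorem stmt9 (m : ℕ) [NeZero m] (hm : m % 4 = 2)
    (A B : Finset (ZMod m)) (hU : A ∪ B = Finset.univ) (hI : (A ∩ B).card = m - 4) :
    (∀ n : ZMod m, repFn A n = repFn B n) ↔
      B = A.image (fun x => x + ((m / 2 : ℕ) : ZMod m)) := by
  set h : ZMod m := ((m / 2 : ℕ) : ZMod m)
  have hh : h + h = 0 := ZMod.natCast_half_add_self (Nat.even_iff.2 (by omega))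
  refine ⟨fun hR => ?_, fun hB n => ?_⟩
  · have hAB := card_eq_of_repFn_eq hR
    have hC : #(A \ B) ≤ 2 := by
      have hAI := card_sdiff_add_card_inter A B
      have hBI := card_sdiff_add_card_inter B A
      have hUI := card_union_add_card_inter A B
      rw [inter_comm] at hBI
      rw [hU, card_univ, ZMod.card] at hUI
      omega
    have hD : B \ A = (A \ B).image (· + h) :=
      eq_image_add_of_repFn_eq hh (fun _ => ZMod.eq_zero_or_eq_half_of_add_self_eq_zero)
        (ZMod.add_self_ne_half hm) disjoint_sdiff_sdiff (card_sdiff_comm hAB) hC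
        (repFn_sdiff_eq_of_union_eq_univ hU hR)
    calc B = (A \ B)ᶜ := eq_compl_sdiff_of_union_eq_univ (union_comm A B ▸ hU)
      _ = (((A \ B).image (· + h)).image (· + h))ᶜ := by
        rw [image_image]
        simp only [Function.comp_def, add_assoc, hh, add_zero, image_id']
      _ = A.image (· + h) := by
        rw [← hD, ← image_add_compl, ← eq_compl_sdiff_of_union_eq_univ hU]
  · rw [hB, ← repFn_image_add_right A h n, add_assoc, hh, add_zero]
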